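/- Two quantales A and B are Morita equivalent if and only if there exists a projective generator Q in the category Mod_A(Sl) of right A-modules such that B is isomorphic as a quantale to the endomorphism quantale Hom_A(Q,Q). -/

import Mathlib

open CategoryTheory Set

universe u v w

class UQuantale (A : Type u) extends CompleteLattice A, Monoid A where
  mul_sSup : ∀ (a : A) (s : Set A), a * sSup s = ⨆ b ∈ s, a * b
  sSup_mul : ∀ (s : Set A) (b : A), sSup s * b = ⨆ a ∈ s, a * b

namespace UQuantale
variable {A : Type u} [UQuantale A]

theorem mul_iSup {ι : Sort w} (a : A) (f : ι → A) : a * (⨆ i, f i) = ⨆ i, a * f i := by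
  rw [iSup, mul_sSup]; exact iSup_range

theorem iSup_mul {ι : Sort w} (f : ι → A) (b : A) : (⨆ i, f i) * b = ⨆ i, f i * b := by
  rw [iSup, sSup_mul]; exact iSup_range

theorem mul_bot (a : A) : a * (⊥ : A) = ⊥ := by
  have := mul_sSup a (∅ : Set A); simpa using this

theorem bot_mul (a : A) : (⊥ : A) * a = ⊥ := by
  have := sSup_mul (∅ : Set A) a; simpa using this

end UQuantale

structure QMod (A : Type u) [UQuantale A] : Type (max u (v + 1)) where
  carrier : Type v
  [latt : CompleteLattice carrier]
  act : carrier → A → carrier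
  act_one : ∀ m, act m 1 = m
  act_mul : ∀ m a b, act m (a * b) = act (act m a) b
  sSup_act : ∀ (s : Set carrier) (a : A), act (sSup s) a = ⨆ m ∈ s, act m a
  act_sSup : ∀ (m : carrier) (s : Set A), act m (sSup s) = ⨆ a ∈ s, act m a

attribute [instance] QMod.latt

namespace QMod

variable {A : Type u} [UQuantale A]

def IsHom (M N : QMod.{u, v} A) (f : M.carrier → N.carrier) : Prop :=
  (∀ s : Set M.carrier, f (sSup s) = ⨆ m ∈ s, f m) ∧
  (∀ m a, f (M.act m a) = N.act (f m) a)

theorem isHom_id (M : QMod.{u, v} A) : IsHom M M id :=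
  ⟨fun s => by simp [sSup_eq_iSup], fun _ _ => rfl⟩

theorem isHom_comp {M N P : QMod.{u, v} A} {f : M.carrier → N.carrier}
    {g : N.carrier → P.carrier} (hf : IsHom M N f) (hg : IsHom N P g) :
    IsHom M P (g ∘ f) := by
  constructor
  · intro s
    show g (f (sSup s)) = _
    rw [hf.1 s, ← sSup_image, hg.1, iSup_image]
    rfl
  · intro m a
    show g (f (M.act m a)) = _
    rw [hf.2, hg.2]
    rfl

instance : Category.{v} (QMod.{u, v} A) where
  Hom M N := { f : M.carrier → N.carrier // IsHom M N f }
  id M := ⟨id, isHom_id M⟩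
  comp f g := ⟨g.1 ∘ f.1, isHom_comp f.2 g.2⟩
  id_comp _ := Subtype.ext rfl
  comp_id _ := Subtype.ext rfl
  assoc _ _ _ := Subtype.ext rfl

theorem iSup_act (M : QMod.{u, v} A) {ι : Sort w} (g : ι → M.carrier) (a : A) :
    M.act (⨆ i, g i) a = ⨆ i, M.act (g i) a := by
  rw [iSup, M.sSup_act]; exact iSup_range

theorem act_iSup (M : QMod.{u, v} A) (m : M.carrier) {ι : Sort w} (g : ι → A) :
    M.act m (⨆ i, g i) = ⨆ i, M.act m (g i) := by
  rw [iSup, M.act_sSup]; exact iSup_range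

theorem hom_iSup {M N : QMod.{u, v} A} (f : M ⟶ N) {ι : Sort w} (g : ι → M.carrier) :
    f.1 (⨆ i, g i) = ⨆ i, f.1 (g i) := by
  rw [iSup, f.2.1, iSup_range]

/-- The pointwise supremum of a set of module morphisms is a module morphism. -/
theorem isHom_biSup {M N : QMod.{u, v} A} (s : Set (M ⟶ N)) :
    IsHom M N (fun m => ⨆ f ∈ s, f.1 m) := by
  constructor
  · intro t
    calc (⨆ f ∈ s, f.1 (sSup t)) = ⨆ f ∈ s, ⨆ m ∈ t, f.1 m :=
          iSup_congr fun f => iSup_congr fun _ => f.2.1 t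
      _ = ⨆ m ∈ t, ⨆ f ∈ s, f.1 m := iSup₂_comm _
  · intro m a
    simp only [iSup_act]
    exact iSup_congr fun f => iSup_congr fun _ => f.2.2 m a

instance homSupSet (M N : QMod.{u, v} A) : SupSet (M ⟶ N) :=
  ⟨fun s => ⟨fun m => ⨆ f ∈ s, f.1 m, isHom_biSup s⟩⟩

instance homPartialOrder (M N : QMod.{u, v} A) : PartialOrder (M ⟶ N) :=
  inferInstanceAs (PartialOrder { f : M.carrier → N.carrier // IsHom M N f })

theorem hom_le_iff {M N : QMod.{u, v} A} {f g : M ⟶ N} : f ≤ g ↔ ∀ m, f.1 m ≤ g.1 m :=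
  Iff.rfl

instance homCompleteLattice (M N : QMod.{u, v} A) : CompleteLattice (M ⟶ N) :=
  completeLatticeOfSup _ (fun s => by
    constructor
    · intro f hf
      intro m
      exact le_iSup₂ (f := fun (f : M ⟶ N) (_ : f ∈ s) => f.1 m) f hf
    · intro g hg
      intro m
      exact iSup₂_le fun f hf => hg hf m)

theorem sSup_hom_apply {M N : QMod.{u, v} A} (s : Set (M ⟶ N)) (m : M.carrier) :
    (sSup s).1 m = ⨆ f ∈ s, f.1 m := rfl

theorem iSup_hom_apply {M N : QMod.{u, v} A} {ι : Sort w} (F : ι → (M ⟶ N)) (m : M.carrier) :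
    (⨆ i, F i).1 m = ⨆ i, (F i).1 m := by
  rw [iSup]
  show ⨆ f ∈ range F, f.1 m = _
  exact iSup_range

instance endMonoid (M : QMod.{u, v} A) : Monoid (M ⟶ M) where
  mul f g := g ≫ f
  one := 𝟙 M
  mul_assoc _ _ _ := Subtype.ext rfl
  one_mul _ := Subtype.ext rfl
  mul_one _ := Subtype.ext rfl

theorem end_mul_apply {M : QMod.{u, v} A} (f g : M ⟶ M) (m : M.carrier) :
    (f * g).1 m = f.1 (g.1 m) := rfl

/-- The endomorphism quantale `Hom_A(M,M)` of a right `A`-module `M`: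
multiplication is composition, the unit is the identity, suprema are pointwise. -/
instance endQuantale (M : QMod.{u, v} A) : UQuantale (M ⟶ M) :=
  { homCompleteLattice M M, endMonoid M with
    mul_sSup := fun a s => by
      apply Subtype.ext
      funext m
      show a.1 ((sSup s).1 m) = (⨆ b ∈ s, a * b).1 m
      rw [sSup_hom_apply]
      simp only [hom_iSup, iSup_hom_apply]
      rfl
    sSup_mul := fun s b => by
      apply Subtype.ext
      funext m
      show (sSup s).1 (b.1 m) = (⨆ a ∈ s, a * b).1 m
      rw [sSup_hom_apply]
      simp only [iSup_hom_apply]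
      rfl }

/-- `Q` is a generator of the category of right `A`-modules:
the hom functor out of `Q` is faithful. -/
def IsGenerator {A : Type u} [UQuantale A] (Q : QMod.{u, v} A) : Prop :=
  ∀ {M N : QMod.{u, v} A} (f g : M ⟶ N), (∀ h : Q ⟶ M, h ≫ f = h ≫ g) → f = g

/-- `Q` is projective: the hom functor out of `Q` sends epimorphisms to surjections. -/
def IsProjective {A : Type u} [UQuantale A] (Q : QMod.{u, v} A) : Prop :=
  ∀ {M N : QMod.{u, v} A} (p : M ⟶ N), Epi p → ∀ h : Q ⟶ N, ∃ k : Q ⟶ M, k ≫ p = h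

end QMod

def MoritaEquivalent (A B : Type u) [UQuantale A] [UQuantale B] : Prop :=
  Nonempty (QMod.{u, u} A ≌ QMod.{u, u} B)

def IsQuantaleIso {A : Type u} {B : Type v} [UQuantale A] [UQuantale B] (f : A → B) : Prop :=
  Function.Bijective f ∧ (∀ s : Set A, f (sSup s) = ⨆ a ∈ s, f a) ∧
    f 1 = 1 ∧ ∀ a a' : A, f (a * a') = f a * f a'
/-!
An equivalence `e : Mod_A ≌ Mod_B` preserves projective generators, so `Q = e⁻¹(B_B)` is one, and
`B ≅ End(B_B) ≅ End(Q)`. The second isomorphism also respects joins because a fully faithful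
functor preserves the biproduct `N × N`, and `f ⊔ g : M ⟶ N` is the pair `(f, g) : M ⟶ N × N`
followed by the codiagonal.

Conversely, let `Q` be a projective generator and `E = End(Q)`. Then `Hom_A(Q, -) : Mod_A ⥤ Mod_E`
has the inverse `Hom_E(Q*, -)`, where `Q* = Hom_A(Q, A)`. Projectivity splits the canonical
epimorphism `⨁_{y ∈ Q} A ⟶ Q`. This gives a dual basis `1_E = ⨆ y, y ⊗ σ_y`. Since `Q` is a
generator, `⨁_{h : Q ⟶ A} Q ⟶ A` is an epimorphism. It is therefore surjective, which gives a
trace decomposition `1_A = ⨆ h, h (c_h)`. These two decompositions invert the unit and counit.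
Epimorphisms are surjective because `Aᵒᵈ` is a cogenerator, with `a` acting by residuation.
Finally `B ≅ E` identifies `Mod_E` with `Mod_B` by restriction of scalars.
-/

theorem gc_of_map_sSup {α β : Type*} [CompleteLattice α] [CompleteLattice β] {f : α → β}
    (hf : ∀ s, f (sSup s) = ⨆ a ∈ s, f a) : GaloisConnection f fun b => sSup {a | f a ≤ b} := by
  have mono : Monotone f := fun x y hxy => by
    have h := hf {x, y}
    rw [sSup_pair, sup_eq_right.2 hxy, iSup_pair] at h
    exact h ▸ le_sup_left
  refine fun a b => ⟨fun h => le_sSup h, fun h => (mono h).trans ?_⟩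
  rw [hf]
  exact iSup₂_le fun _ h => h

instance (A : Type u) [UQuantale A] : IsQuantale A :=
  ⟨UQuantale.mul_sSup, UQuantale.sSup_mul⟩

def IsQuantaleHom {A : Type u} {B : Type v} [UQuantale A] [UQuantale B] (f : A → B) : Prop :=
  (∀ s : Set A, f (sSup s) = ⨆ a ∈ s, f a) ∧ f 1 = 1 ∧ ∀ a a' : A, f (a * a') = f a * f a'

theorem isQuantaleHom_id (A : Type u) [UQuantale A] : IsQuantaleHom (id : A → A) :=
  ⟨fun _ => sSup_eq_iSup, rfl, fun _ _ => rfl⟩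

namespace IsQuantaleHom

variable {A B C : Type*} [UQuantale A] [UQuantale B] [UQuantale C] {f : A → B} {g : B → C}

theorem map_iSup (hf : IsQuantaleHom f) {ι : Sort*} (x : ι → A) :
    f (⨆ i, x i) = ⨆ i, f (x i) := by
  rw [iSup, hf.1, iSup_range]

theorem comp (hg : IsQuantaleHom g) (hf : IsQuantaleHom f) : IsQuantaleHom (g ∘ f) :=
  ⟨fun s => by simp only [Function.comp_apply, hf.1, hg.map_iSup],
    by simp only [Function.comp_apply, hf.2.1, hg.2.1],
    fun a a' => by simp only [Function.comp_apply, hf.2.2, hg.2.2]⟩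

end IsQuantaleHom

namespace IsQuantaleIso

variable {A B C : Type*} [UQuantale A] [UQuantale B] [UQuantale C] {f : A → B} {g : B → C}

theorem comp (hg : IsQuantaleIso g) (hf : IsQuantaleIso f) : IsQuantaleIso (g ∘ f) :=
  ⟨hg.1.comp hf.1, IsQuantaleHom.comp hg.2 hf.2⟩

theorem isQuantaleHom_symm (hf : IsQuantaleIso f) :
    IsQuantaleHom (Equiv.ofBijective f hf.1).symm := by
  set e := Equiv.ofBijective f hf.1
  have hf' : IsQuantaleHom (e : A → B) := hf.2
  refine ⟨fun s => e.injective ?_, e.injective ?_, fun b b' => e.injective ?_⟩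
  · simp only [hf'.map_iSup, e.apply_symm_apply, sSup_eq_iSup]
  · rw [e.apply_symm_apply, hf'.2.1]
  · rw [hf'.2.2, e.apply_symm_apply, e.apply_symm_apply, e.apply_symm_apply]

end IsQuantaleIso

namespace QMod

variable {A : Type u} [UQuantale A]

section Basic

variable {M N P : QMod.{u, v} A}

@[ext]
theorem hom_ext {f g : M ⟶ N} (h : ∀ m, f.1 m = g.1 m) : f = g :=
  Subtype.ext (funext h)

@[simp]
theorem comp_apply (f : M ⟶ N) (g : N ⟶ P) (m : M.carrier) : (f ≫ g).1 m = g.1 (f.1 m) := rfl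

@[simp]
theorem id_apply (m : M.carrier) : (𝟙 M : M ⟶ M).1 m = m := rfl

theorem gc_hom (f : M ⟶ N) : GaloisConnection f.1 fun n => sSup {m | f.1 m ≤ n} :=
  gc_of_map_sSup f.2.1

theorem le_sSup_act_le_iff {n x : M.carrier} {a : A} :
    a ≤ sSup {b | M.act n b ≤ x} ↔ M.act n a ≤ x :=
  ((gc_of_map_sSup (M.act_sSup n)).le_iff_le).symm

theorem bot_act (a : A) : M.act ⊥ a = ⊥ :=
  (gc_of_map_sSup (f := (M.act · a)) (M.sSup_act · a)).l_bot

theorem sup_act (m m' : M.carrier) (a : A) : M.act (m ⊔ m') a = M.act m a ⊔ M.act m' a :=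
  (gc_of_map_sSup (f := (M.act · a)) (M.sSup_act · a)).l_sup

theorem sup_hom_apply (f g : M ⟶ N) (m : M.carrier) : (f ⊔ g).1 m = f.1 m ⊔ g.1 m := by
  change (sSup {f, g}).1 m = _
  rw [sSup_hom_apply, iSup_pair]

theorem bot_hom_apply (m : M.carrier) : (⊥ : M ⟶ N).1 m = ⊥ := by
  change (sSup ∅ : M ⟶ N).1 m = _
  rw [sSup_hom_apply]
  simp

theorem iSup_comp {ι : Sort w} (f : ι → (M ⟶ N)) (g : N ⟶ P) :
    (⨆ i, f i) ≫ g = ⨆ i, f i ≫ g := by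
  ext m
  simp only [comp_apply, iSup_hom_apply, hom_iSup]

theorem comp_iSup {ι : Sort w} (f : M ⟶ N) (g : ι → (N ⟶ P)) :
    f ≫ (⨆ i, g i) = ⨆ i, f ≫ g i := by
  ext m
  simp only [comp_apply, iSup_hom_apply]

theorem bot_comp (g : N ⟶ P) : (⊥ : M ⟶ N) ≫ g = ⊥ :=
  hom_ext fun m => by rw [comp_apply, bot_hom_apply, bot_hom_apply, (gc_hom g).l_bot]

theorem comp_bot (f : M ⟶ N) : f ≫ (⊥ : N ⟶ P) = ⊥ :=
  hom_ext fun m => by rw [comp_apply, bot_hom_apply, bot_hom_apply]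

noncomputable def isoOfBijective (f : M ⟶ N) (hf : Function.Bijective f.1) : M ≅ N :=
  let e := Equiv.ofBijective f.1 hf
  have hfe : ∀ n, f.1 (e.symm n) = n := e.apply_symm_apply
  { hom := f
    inv := ⟨e.symm, fun s => hf.1 (by simp only [hom_iSup, hfe, sSup_eq_iSup]),
      fun n a => hf.1 (by rw [f.2.2, hfe, hfe])⟩
    hom_inv_id := hom_ext e.symm_apply_apply
    inv_hom_id := hom_ext hfe }

theorem epi_of_surjective (p : M ⟶ N) (hp : Function.Surjective p.1) : Epi p :=
  ⟨fun u v huv => hom_ext fun n => by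
    obtain ⟨m, rfl⟩ := hp n
    exact congrArg (fun w => w.1 m) huv⟩

end Basic

section Regular

abbrev regMod (A : Type u) [UQuantale A] : QMod.{u, u} A where
  carrier := A
  act a b := a * b
  act_one := mul_one
  act_mul m a b := (mul_assoc m a b).symm
  sSup_act := UQuantale.sSup_mul
  act_sSup := UQuantale.mul_sSup

def actHom (M : QMod.{u, u} A) (m : M.carrier) : regMod A ⟶ M :=
  ⟨M.act m, M.act_sSup m, M.act_mul m⟩

variable {M N : QMod.{u, u} A}

@[simp]
theorem actHom_apply (m : M.carrier) (a : A) : (actHom M m).1 a = M.act m a := rfl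

theorem actHom_comp (m : M.carrier) (f : M ⟶ N) : actHom M m ≫ f = actHom N (f.1 m) :=
  hom_ext fun a => f.2.2 m a

theorem eq_actHom (f : regMod A ⟶ M) : f = actHom M (f.1 1) :=
  hom_ext fun a => by
    rw [actHom_apply, ← f.2.2]
    exact congrArg f.1 (one_mul a).symm

theorem actHom_sSup (s : Set M.carrier) : actHom M (sSup s) = ⨆ m ∈ s, actHom M m :=
  hom_ext fun a => by simp only [actHom_apply, M.sSup_act, iSup_hom_apply]

theorem isQuantaleIso_actHom : IsQuantaleIso (actHom (regMod A)) := by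
  refine ⟨⟨fun a b h => ?_, fun f => ⟨_, (eq_actHom f).symm⟩⟩, fun s => ?_, ?_, fun a b => ?_⟩
  · simpa using congrArg (fun f => f.1 1) h
  · exact hom_ext fun x => by simp only [actHom_apply, UQuantale.sSup_mul, iSup_hom_apply]
  · exact hom_ext fun x => one_mul x
  · exact hom_ext fun x => mul_assoc a b x

end Regular

section Dualizing

open Quantale OrderDual

abbrev dualizingMod (A : Type u) [UQuantale A] : QMod.{u, u} A where
  carrier := Aᵒᵈ
  act α a := toDual (α := A) (a ⇨ᵣ ofDual α)
  act_one α := ofDual.injective <| eq_of_forall_le_iff fun x => by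
    simp [rightMulResiduation_le_iff_mul_le]
  act_mul α a b := ofDual.injective <| eq_of_forall_le_iff fun x => by
    simp [rightMulResiduation_le_iff_mul_le, mul_assoc]
  sSup_act s a := ofDual.injective <| eq_of_forall_le_iff fun x => by
    simp [rightMulResiduation_le_iff_mul_le]
  act_sSup α s := ofDual.injective <| eq_of_forall_le_iff fun x => by
    simp [rightMulResiduation_le_iff_mul_le, sSup_mul_distrib]

/-- These morphisms separate the points of `M` (`residual_injective`), so `dualizingMod A` is a
cogenerator. -/
def residual (M : QMod.{u, u} A) (x : M.carrier) : M ⟶ dualizingMod A :=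
  ⟨fun n => toDual (α := A) (sSup {a | M.act n a ≤ x}),
    fun s => (ofDual (α := A)).injective <| eq_of_forall_le_iff fun (a : A) => by
      rw [ofDual_toDual, le_sSup_act_le_iff, M.sSup_act, iSup₂_le_iff]
      simp only [ofDual_iSup, le_iInf_iff, ofDual_toDual, le_sSup_act_le_iff],
    fun n a => (ofDual (α := A)).injective <| eq_of_forall_le_iff fun (b : A) => by
      simp only [ofDual_toDual, le_sSup_act_le_iff, rightMulResiduation_le_iff_mul_le,
        M.act_mul]⟩

theorem residual_apply (M : QMod.{u, u} A) (x n : M.carrier) :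
    (residual M x).1 n = toDual (α := A) (sSup {a | M.act n a ≤ x}) := rfl

theorem residual_injective (M : QMod.{u, u} A) : Function.Injective (residual M) := by
  have key : ∀ x y, residual M x = residual M y → x ≤ y := fun x y h => by
    have h1 : (1 : A) ≤ sSup {a | M.act x a ≤ x} := le_sSup (by simp [M.act_one])
    have h2 := congrArg (fun f : M ⟶ dualizingMod A => ofDual (α := A) (f.1 x)) h
    simp only [residual_apply, ofDual_toDual] at h2
    rw [h2] at h1
    simpa [M.act_one] using le_sSup_act_le_iff.1 h1
  exact fun x y h => le_antisymm (key x y h) (key y x h.symm)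

theorem surjective_of_epi {M N : QMod.{u, u} A} (p : M ⟶ N) [Epi p] :
    Function.Surjective p.1 := by
  intro x
  -- Against elements of the image of `p`, `x` has the same residuals as the largest element of
  -- that image below it.
  refine ⟨sSup {m | p.1 m ≤ x}, residual_injective N ((cancel_epi p).1 (hom_ext fun m => ?_))⟩
  refine (ofDual (α := A)).injective <| eq_of_forall_le_iff fun (a : A) => ?_
  simp only [comp_apply, residual_apply, ofDual_toDual]
  rw [le_sSup_act_le_iff, le_sSup_act_le_iff, ← p.2.2, (gc_hom p).le_iff_le,
    (gc_hom p).le_iff_le, (gc_hom p).u_l_u_eq_u]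

end Dualizing

section Copower

variable (ι : Type u) (N : QMod.{u, u} A) {M : QMod.{u, u} A}

/-- The copower `ι • N`: in sup-lattices the product `N^ι` is also the coproduct. -/
abbrev copow : QMod.{u, u} A where
  carrier := ι → N.carrier
  act c a i := N.act (c i) a
  act_one c := funext fun i => N.act_one (c i)
  act_mul c a b := funext fun i => N.act_mul (c i) a b
  sSup_act s a := funext fun i => by
    simp only [sSup_apply, iSup_apply, iSup_act]
    exact iSup_subtype'' s fun c => N.act (c i) a
  act_sSup c s := funext fun i => by
    simp only [iSup_apply, N.act_sSup]

variable {ι N}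

def copowProj (i : ι) : copow ι N ⟶ N :=
  ⟨fun c => c i, fun s => by
    change sSup s i = _
    rw [sSup_apply]
    exact iSup_subtype'' s fun c => c i, fun _ _ => rfl⟩

open Classical in
noncomputable def copowInj (i : ι) : N ⟶ copow ι N :=
  ⟨fun n j => if j = i then n else ⊥,
    fun s => funext fun j => by by_cases h : j = i <;> simp [h, sSup_eq_iSup],
    fun n a => funext fun j => by by_cases h : j = i <;> simp [h, bot_act]⟩

def copowDesc (f : ι → (N ⟶ M)) : copow ι N ⟶ M :=
  ⟨fun c => ⨆ i, (f i).1 (c i),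
    fun s => by
      simp only [sSup_apply, hom_iSup]
      rw [iSup_comm]
      exact iSup_subtype'' s fun c => ⨆ i, (f i).1 (c i),
    fun c a => by
      simp only [iSup_act]
      exact iSup_congr fun i => (f i).2.2 (c i) a⟩

theorem copowInj_comp_copowDesc (f : ι → (N ⟶ M)) (i : ι) :
    copowInj i ≫ copowDesc f = f i := by
  classical
  refine hom_ext fun n => le_antisymm (iSup_le fun j => ?_) (le_iSup_of_le i ?_)
  · by_cases h : j = i
    · subst h; simp [copowInj]
    · simp [copowInj, h, (gc_hom (f j)).l_bot]
  · simp [copowInj]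

end Copower

variable {Q : QMod.{u, u} A}

theorem exists_dualBasis (hQ : IsProjective Q) :
    ∃ σ : Q.carrier → (Q ⟶ regMod A), ⨆ y, σ y ≫ actHom Q y = 𝟙 Q := by
  let p := copowDesc (actHom Q)
  have hp : Function.Surjective p.1 := fun q =>
    ⟨(copowInj q).1 1, by rw [← comp_apply, copowInj_comp_copowDesc, actHom_apply, Q.act_one]⟩
  obtain ⟨s, hs⟩ := hQ p (epi_of_surjective p hp) (𝟙 Q)
  exact ⟨fun y => s ≫ copowProj y, hom_ext fun q => by rw [iSup_hom_apply, ← hs]; rfl⟩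

theorem exists_trace (hQ : IsGenerator Q) :
    ∃ c : (Q ⟶ regMod A) → Q.carrier, ⨆ h : Q ⟶ regMod A, h.1 (c h) = (1 : A) := by
  let p := copowDesc (fun h : Q ⟶ regMod A => h)
  have : Epi p := ⟨fun u v huv => hQ u v fun h => by
    rw [← copowInj_comp_copowDesc (fun h : Q ⟶ regMod A => h) h, Category.assoc,
      Category.assoc, huv]⟩
  exact surjective_of_epi p 1

end QMod

namespace QMod

section HomFunctor

variable {R S : Type u} [UQuantale R] [UQuantale S] (P : QMod.{u, u} R) (ρ : S → (P ⟶ P))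
  (hρ : IsQuantaleHom ρ)

abbrev homMod (M : QMod.{u, u} R) : QMod.{u, u} S where
  carrier := P ⟶ M
  act Φ s := ρ s ≫ Φ
  act_one Φ := by rw [hρ.2.1]; exact Category.id_comp Φ
  act_mul Φ s s' := by rw [hρ.2.2]; rfl
  sSup_act t s := by simp only [sSup_eq_iSup, comp_iSup]
  act_sSup Φ t := by simp only [hρ.1, iSup_comp]

abbrev homFunctor : QMod.{u, u} R ⥤ QMod.{u, u} S where
  obj := homMod P ρ hρ
  map φ := ⟨fun Φ => Φ ≫ φ, fun t => by simp only [sSup_eq_iSup, iSup_comp],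
    fun Φ s => Category.assoc _ _ _⟩
  map_id M := hom_ext fun Φ => Category.comp_id Φ
  map_comp φ ψ := hom_ext fun Φ => (Category.assoc Φ φ ψ).symm

theorem homFunctor_map_biSup {M N : QMod.{u, u} R} {ι : Type*} (s : Set ι) (φ : ι → (M ⟶ N)) :
    (homFunctor P ρ hρ).map (⨆ i ∈ s, φ i) = ⨆ i ∈ s, (homFunctor P ρ hρ).map (φ i) :=
  hom_ext fun Φ => by
    change Φ ≫ (⨆ i ∈ s, φ i) = _
    rw [comp_iSup, iSup_hom_apply]
    refine iSup_congr fun i => ?_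
    rw [comp_iSup, iSup_hom_apply]

theorem isQuantaleHom_homFunctor_map (M : QMod.{u, u} R) :
    IsQuantaleHom ((homFunctor P ρ hρ).map : (M ⟶ M) → _) :=
  ⟨fun s => by rw [sSup_eq_iSup, homFunctor_map_biSup], (homFunctor P ρ hρ).map_id M,
    fun f g => (homFunctor P ρ hρ).map_comp g f⟩

end HomFunctor

variable {A : Type u} [UQuantale A] (Q : QMod.{u, u} A)

abbrev moritaFunctor : QMod.{u, u} A ⥤ QMod.{u, u} (Q ⟶ Q) :=
  homFunctor Q id (isQuantaleHom_id _)

/-- `Hom_{End Q}(Q*, -)`, where `A` acts on `Q* = Hom_A(Q, A)` by left multiplication. -/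
abbrev moritaInverse : QMod.{u, u} (Q ⟶ Q) ⥤ QMod.{u, u} A :=
  homFunctor ((moritaFunctor Q).obj (regMod A))
    (fun a => (moritaFunctor Q).map (actHom (regMod A) a))
    ((isQuantaleHom_homFunctor_map _ _ _ _).comp isQuantaleIso_actHom.2)

variable {M N : QMod.{u, u} A} {X Y : QMod.{u, u} (Q ⟶ Q)}

def moritaUnit (M : QMod.{u, u} A) : M ⟶ (moritaInverse Q).obj ((moritaFunctor Q).obj M) :=
  ⟨fun m => (moritaFunctor Q).map (actHom M m),
    fun s => by beta_reduce; rw [actHom_sSup, homFunctor_map_biSup],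
    fun m a => by
      change _ = (moritaFunctor Q).map (actHom (regMod A) a) ≫ (moritaFunctor Q).map (actHom M m)
      rw [← Functor.map_comp, actHom_comp]
      rfl⟩

theorem moritaUnit_naturality (φ : M ⟶ N) :
    φ ≫ moritaUnit Q N = moritaUnit Q M ≫ (moritaInverse Q).map ((moritaFunctor Q).map φ) :=
  hom_ext fun m => by
    change (moritaFunctor Q).map (actHom N (φ.1 m)) =
      (moritaFunctor Q).map (actHom M m) ≫ (moritaFunctor Q).map φ
    rw [← Functor.map_comp, actHom_comp]

theorem moritaUnit_apply_eval (Ψ : ((moritaInverse Q).obj ((moritaFunctor Q).obj M)).carrier)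
    (h : Q ⟶ regMod A) (y : Q.carrier) :
    (moritaUnit Q M).1 ((Ψ.1 h).1 y) = ((moritaInverse Q).obj _).act Ψ (h.1 y) := by
  have hΨ (ξ : Q ⟶ regMod A) : Ψ.1 ((ξ ≫ actHom Q y) ≫ h) = (ξ ≫ actHom Q y) ≫ Ψ.1 h :=
    Ψ.2.2 h (ξ ≫ actHom Q y)
  refine hom_ext fun ξ => hom_ext fun q => ?_
  change M.act ((Ψ.1 h).1 y) (ξ.1 q) = (Ψ.1 (ξ ≫ actHom (regMod A) (h.1 y))).1 q
  rw [← actHom_comp, ← Category.assoc, hΨ]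
  exact ((Ψ.1 h).2.2 y (ξ.1 q)).symm

theorem moritaUnit_bijective (hQ : IsGenerator Q) (M : QMod.{u, u} A) :
    Function.Bijective (moritaUnit Q M).1 := by
  obtain ⟨c, hc⟩ := exists_trace hQ
  refine Function.bijective_iff_has_inverse.2
    ⟨fun Ψ => ⨆ h, (Ψ.1 h).1 (c h), fun m => ?_, fun Ψ => ?_⟩
  · change ⨆ h : Q ⟶ regMod A, M.act m (h.1 (c h)) = m
    rw [← act_iSup, hc, M.act_one]
  · rw [hom_iSup, iSup_congr fun h => moritaUnit_apply_eval Q Ψ h (c h), ← act_iSup, hc,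
      act_one]

/-- `x ↦ (q ↦ (ξ ↦ x · (q ⊗ ξ)))`, where `q ⊗ ξ` is the endomorphism `y ↦ q · ξ(y)`. -/
def moritaCounitInv (X : QMod.{u, u} (Q ⟶ Q)) :
    X ⟶ (moritaFunctor Q).obj ((moritaInverse Q).obj X) :=
  ⟨fun x => moritaUnit Q Q ≫ (moritaInverse Q).map (actHom X x : (moritaFunctor Q).obj Q ⟶ X),
    fun s => by
      beta_reduce
      rw [actHom_sSup, homFunctor_map_biSup]
      simp only [comp_iSup],
    fun x e => by
      have he : (moritaFunctor Q).map e ≫ (actHom X x : (moritaFunctor Q).obj Q ⟶ X) =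
          actHom X (X.act x e) :=
        actHom_comp (M := regMod (Q ⟶ Q)) e (actHom X x)
      change moritaUnit Q Q ≫ (moritaInverse Q).map (actHom X (X.act x e)) =
        e ≫ moritaUnit Q Q ≫ _
      rw [← he, Functor.map_comp, ← Category.assoc, ← moritaUnit_naturality, Category.assoc]⟩

theorem moritaCounitInv_naturality (v : X ⟶ Y) :
    v ≫ moritaCounitInv Q Y =
      moritaCounitInv Q X ≫ (moritaFunctor Q).map ((moritaInverse Q).map v) :=
  hom_ext fun x => hom_ext fun _ => hom_ext fun _ => (v.2.2 x _).symm

theorem moritaCounitInv_apply_eval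
    (k : ((moritaFunctor Q).obj ((moritaInverse Q).obj X)).carrier) (y : Q.carrier)
    (ξ : Q ⟶ regMod A) :
    (moritaCounitInv Q X).1 ((k.1 y).1 ξ) = ((moritaFunctor Q).obj _).act k (ξ ≫ actHom Q y) := by
  have hk (e : Q ⟶ Q) : (k.1 y).1 (e ≫ ξ) = X.act ((k.1 y).1 ξ) e := (k.1 y).2.2 ξ e
  refine hom_ext fun q => hom_ext fun ξ₀ => ?_
  change X.act ((k.1 y).1 ξ) (ξ₀ ≫ actHom Q q) = (k.1 (Q.act y (ξ.1 q))).1 ξ₀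
  rw [k.2.2 y (ξ.1 q), ← hk, Category.assoc, actHom_comp]
  rfl

theorem moritaCounitInv_bijective (hQ : IsProjective Q) (X : QMod.{u, u} (Q ⟶ Q)) :
    Function.Bijective (moritaCounitInv Q X).1 := by
  obtain ⟨σ, hσ⟩ := exists_dualBasis hQ
  refine Function.bijective_iff_has_inverse.2
    ⟨fun k => ⨆ y, (k.1 y).1 (σ y), fun x => ?_, fun k => ?_⟩
  · change ⨆ y, X.act x (σ y ≫ actHom Q y) = x
    rw [← act_iSup, hσ]
    exact X.act_one x
  · rw [hom_iSup, iSup_congr fun y => moritaCounitInv_apply_eval Q k y (σ y), ← act_iSup, hσ]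
    exact act_one _ k

noncomputable def moritaEquivalence (hgen : IsGenerator Q) (hproj : IsProjective Q) :
    QMod.{u, u} A ≌ QMod.{u, u} (Q ⟶ Q) :=
  CategoryTheory.Equivalence.mk (moritaFunctor Q) (moritaInverse Q)
    (NatIso.ofComponents (fun M => isoOfBijective _ (moritaUnit_bijective Q hgen M))
      (moritaUnit_naturality Q))
    (NatIso.ofComponents (fun X => isoOfBijective _ (moritaCounitInv_bijective Q hproj X))
      (moritaCounitInv_naturality Q)).symm

section RestrictScalars

variable {C D : Type u} [UQuantale C] [UQuantale D]

def restrictScalars (f : C → D) (hf : IsQuantaleHom f) : QMod.{u, u} D ⥤ QMod.{u, u} C where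
  obj X :=
    { carrier := X.carrier
      act := fun m c => X.act m (f c)
      act_one := fun m => by rw [hf.2.1, X.act_one]
      act_mul := fun m a b => by rw [hf.2.2, X.act_mul]
      sSup_act := fun s c => X.sSup_act s (f c)
      act_sSup := fun m s => by simp only [hf.1, act_iSup] }
  map u := ⟨u.1, u.2.1, fun m c => u.2.2 m (f c)⟩

def restrictScalarsCompIso (f : C → D) (hf : IsQuantaleHom f) (g : D → C)
    (hg : IsQuantaleHom g) (hfg : ∀ d, f (g d) = d) :
    restrictScalars f hf ⋙ restrictScalars g hg ≅ 𝟭 (QMod.{u, u} D) :=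
  NatIso.ofComponents
    (fun X =>
      { hom := ⟨id, fun _ => sSup_eq_iSup, fun m d => by
          change X.act m (f (g d)) = X.act m d
          rw [hfg]⟩
        inv := ⟨id, fun _ => sSup_eq_iSup, fun m d => by
          change X.act m d = X.act m (f (g d))
          rw [hfg]⟩ })
    fun _ => rfl

noncomputable def restrictScalarsEquiv (f : C → D) (hf : IsQuantaleIso f) :
    QMod.{u, u} D ≌ QMod.{u, u} C :=
  CategoryTheory.Equivalence.mk (restrictScalars f hf.2) (restrictScalars _ hf.isQuantaleHom_symm)
    (restrictScalarsCompIso f hf.2 _ _ (Equiv.ofBijective f hf.1).apply_symm_apply).symm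
    (restrictScalarsCompIso _ _ f hf.2 (Equiv.ofBijective f hf.1).symm_apply_apply)

end RestrictScalars

theorem moritaEquivalent_of_projective_generator {B : Type u} [UQuantale B] (hgen : IsGenerator Q)
    (hproj : IsProjective Q) {f : B → (Q ⟶ Q)} (hf : IsQuantaleIso f) : MoritaEquivalent A B :=
  ⟨(moritaEquivalence Q hgen hproj).trans (restrictScalarsEquiv f hf)⟩

end QMod

namespace QMod

variable {R : Type u} [UQuantale R]

section Prod

variable {M N P : QMod.{u, u} R}

abbrev prodMod (M N : QMod.{u, u} R) : QMod.{u, u} R where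
  carrier := M.carrier × N.carrier
  act p a := (M.act p.1 a, N.act p.2 a)
  act_one p := Prod.ext (M.act_one p.1) (N.act_one p.2)
  act_mul p a b := Prod.ext (M.act_mul p.1 a b) (N.act_mul p.2 a b)
  sSup_act s a := Prod.ext
    (by simp only [Prod.fst_sSup, M.sSup_act, iSup_image, Prod.fst_iSup])
    (by simp only [Prod.snd_sSup, N.sSup_act, iSup_image, Prod.snd_iSup])
  act_sSup p s := Prod.ext
    (by simp only [M.act_sSup, Prod.fst_iSup])
    (by simp only [N.act_sSup, Prod.snd_iSup])

def prodFst : prodMod M N ⟶ M :=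
  ⟨Prod.fst, fun s => by rw [Prod.fst_sSup, sSup_image], fun _ _ => rfl⟩

def prodSnd : prodMod M N ⟶ N :=
  ⟨Prod.snd, fun s => by rw [Prod.snd_sSup, sSup_image], fun _ _ => rfl⟩

def prodLift (f : P ⟶ M) (g : P ⟶ N) : P ⟶ prodMod M N :=
  ⟨fun m => (f.1 m, g.1 m),
    fun s => by
      change (f.1 (sSup s), g.1 (sSup s)) = _
      rw [f.2.1, g.2.1]
      exact Prod.ext (by simp only [Prod.fst_iSup]) (by simp only [Prod.snd_iSup]),
    fun m a => Prod.ext (f.2.2 m a) (g.2.2 m a)⟩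

def prodDesc (f : M ⟶ P) (g : N ⟶ P) : prodMod M N ⟶ P :=
  ⟨fun p => f.1 p.1 ⊔ g.1 p.2,
    fun s => by
      change f.1 (sSup s).1 ⊔ g.1 (sSup s).2 = _
      rw [Prod.fst_sSup, Prod.snd_sSup, f.2.1, g.2.1, iSup_image, iSup_image, ← iSup_sup_eq]
      exact iSup_congr fun p => iSup_sup_eq.symm,
    fun p a => by
      change f.1 (M.act p.1 a) ⊔ g.1 (N.act p.2 a) = P.act (f.1 p.1 ⊔ g.1 p.2) a
      rw [f.2.2, g.2.2, sup_act]⟩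

theorem prodLift_fst (f : P ⟶ M) (g : P ⟶ N) : prodLift f g ≫ prodFst = f := rfl

theorem prodLift_snd (f : P ⟶ M) (g : P ⟶ N) : prodLift f g ≫ prodSnd = g := rfl

theorem comp_prodLift {P' : QMod.{u, u} R} (k : P' ⟶ P) (f : P ⟶ M) (g : P ⟶ N) :
    k ≫ prodLift f g = prodLift (k ≫ f) (k ≫ g) := rfl

theorem prod_hom_ext {k k' : P ⟶ prodMod M N} (h₁ : k ≫ prodFst = k' ≫ prodFst)
    (h₂ : k ≫ prodSnd = k' ≫ prodSnd) : k = k' :=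
  hom_ext fun m => Prod.ext (congrArg (fun w => w.1 m) h₁) (congrArg (fun w => w.1 m) h₂)

theorem prodDesc_comp {P' : QMod.{u, u} R} (f : M ⟶ P) (g : N ⟶ P) (k : P ⟶ P') :
    prodDesc f g ≫ k = prodDesc (f ≫ k) (g ≫ k) :=
  hom_ext fun _ => (gc_hom k).l_sup

theorem prodLift_comp_prodDesc {P' : QMod.{u, u} R} (a : P' ⟶ M) (b : P' ⟶ N) (f : M ⟶ P)
    (g : N ⟶ P) : prodLift a b ≫ prodDesc f g = a ≫ f ⊔ b ≫ g :=
  hom_ext fun m => (sup_hom_apply (a ≫ f) (b ≫ g) m).symm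

theorem prodLift_id_bot_comp_prodDesc (f : M ⟶ P) (g : N ⟶ P) :
    prodLift (𝟙 M) ⊥ ≫ prodDesc f g = f := by
  rw [prodLift_comp_prodDesc, Category.id_comp, bot_comp, sup_bot_eq]

theorem prodLift_bot_id_comp_prodDesc (f : M ⟶ P) (g : N ⟶ P) :
    prodLift ⊥ (𝟙 N) ≫ prodDesc f g = g := by
  rw [prodLift_comp_prodDesc, Category.id_comp, bot_comp, bot_sup_eq]

theorem prodDesc_id_bot : prodDesc (𝟙 M) (⊥ : N ⟶ M) = prodFst :=
  hom_ext fun p => by simp [prodDesc, bot_hom_apply, prodFst]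

theorem prodDesc_bot_id : prodDesc (⊥ : M ⟶ N) (𝟙 N) = prodSnd :=
  hom_ext fun p => by simp [prodDesc, bot_hom_apply, prodSnd]

end Prod

section FullyFaithful

variable {S : Type u} [UQuantale S] (F : QMod.{u, u} R ⥤ QMod.{u, u} S) [F.Full]
  {M N : QMod.{u, u} R}

/-- `⊥` is the only `z : M ⟶ N` with `z ≫ k = z` for all `k : N ⟶ N`, and a full functor preserves
this property. -/
theorem map_bot_of_full : F.map (⊥ : M ⟶ N) = ⊥ := by
  have absorbs (k : F.obj N ⟶ F.obj N) : F.map (⊥ : M ⟶ N) ≫ k = F.map ⊥ := by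
    rw [← F.map_preimage k, ← F.map_comp, bot_comp]
  rw [← absorbs ⊥, comp_bot]

/-- `f ⊔ g` factors through the biproduct `N × N` as `prodLift f g ≫ prodDesc (𝟙 N) (𝟙 N)`, and a
fully faithful functor preserves this biproduct: `v` and `u` below are mutually inverse. -/
theorem map_sup_of_fullyFaithful [F.Faithful] (f g : M ⟶ N) :
    F.map (f ⊔ g) = F.map f ⊔ F.map g := by
  let inl : N ⟶ prodMod N N := prodLift (𝟙 N) ⊥
  let inr : N ⟶ prodMod N N := prodLift ⊥ (𝟙 N)
  let v := prodLift (F.map (prodFst : prodMod N N ⟶ N)) (F.map prodSnd)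
  let u := prodDesc (F.map inl) (F.map inr)
  have hu (x : prodMod N N ⟶ N) : u ≫ F.map x = prodDesc (F.map (inl ≫ x)) (F.map (inr ≫ x)) := by
    rw [prodDesc_comp, F.map_comp, F.map_comp]
  have hvu : v ≫ u = 𝟙 _ := by
    rw [← F.map_preimage (v ≫ u), ← F.map_id]
    congr 1
    apply prod_hom_ext <;> apply F.map_injective
    · rw [F.map_comp, F.map_preimage, Category.assoc, hu, prodLift_fst, prodLift_fst,
        map_bot_of_full, F.map_id, prodDesc_id_bot, prodLift_fst, Category.id_comp]
    · rw [F.map_comp, F.map_preimage, Category.assoc, hu, prodLift_snd, prodLift_snd,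
        map_bot_of_full, F.map_id, prodDesc_bot_id, prodLift_snd, Category.id_comp]
  have hsup : F.map (prodDesc (𝟙 N) (𝟙 N)) = v ≫ prodDesc (𝟙 _) (𝟙 _) := by
    rw [← Category.id_comp (F.map _), ← hvu, Category.assoc, hu, prodLift_id_bot_comp_prodDesc,
      prodLift_bot_id_comp_prodDesc, F.map_id]
  have hfg : f ⊔ g = prodLift f g ≫ prodDesc (𝟙 N) (𝟙 N) := by
    rw [prodLift_comp_prodDesc, Category.comp_id, Category.comp_id]
  rw [hfg, F.map_comp, hsup, ← Category.assoc, comp_prodLift, ← F.map_comp, ← F.map_comp,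
    prodLift_fst, prodLift_snd, prodLift_comp_prodDesc, Category.comp_id, Category.comp_id]

theorem map_le_map_iff_of_fullyFaithful [F.Faithful] {f g : M ⟶ N} : F.map f ≤ F.map g ↔ f ≤ g := by
  rw [← sup_eq_right, ← sup_eq_right, ← map_sup_of_fullyFaithful, F.map_injective.eq_iff]

theorem isQuantaleIso_map_of_fullyFaithful [F.Faithful] (M : QMod.{u, u} R) :
    IsQuantaleIso (F.map : (M ⟶ M) → (F.obj M ⟶ F.obj M)) :=
  let e : (M ⟶ M) ≃o (F.obj M ⟶ F.obj M) :=
    { Equiv.ofBijective _ ⟨F.map_injective, F.map_surjective⟩ with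
      map_rel_iff' := map_le_map_iff_of_fullyFaithful F }
  ⟨⟨F.map_injective, F.map_surjective⟩, e.map_sSup, F.map_id M, fun f g => F.map_comp g f⟩

end FullyFaithful

theorem isGenerator_iff_isSeparator (Q : QMod.{u, u} R) : IsGenerator Q ↔ IsSeparator Q :=
  (isSeparator_def Q).symm

theorem isProjective_iff_projective (Q : QMod.{u, u} R) : IsProjective Q ↔ Projective Q :=
  ⟨fun h => ⟨fun f e _ => h e inferInstance f⟩, fun _ _ _ p _ f => Projective.factors f p⟩

theorem isGenerator_regMod : IsGenerator (regMod R) := fun {_ N} u v h =>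
  hom_ext fun m => by
    simpa [actHom_comp, N.act_one] using congrArg (fun w => w.1 1) (h (actHom _ m))

theorem isProjective_regMod : IsProjective (regMod R) := fun p _ h => by
  obtain ⟨m, hm⟩ := surjective_of_epi p (h.1 1)
  exact ⟨actHom _ m, by rw [actHom_comp, hm, ← eq_actHom]⟩

theorem exists_projective_generator_of_equivalence {B : Type u} [UQuantale B]
    (e : QMod.{u, u} R ≌ QMod.{u, u} B) :
    ∃ Q : QMod.{u, u} R, IsGenerator Q ∧ IsProjective Q ∧ ∃ f : B → (Q ⟶ Q), IsQuantaleIso f :=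
  ⟨e.inverse.obj (regMod B),
    (isGenerator_iff_isSeparator _).2
      (((isGenerator_iff_isSeparator _).1 isGenerator_regMod).of_equivalence e.symm),
    (isProjective_iff_projective _).2
      ((e.symm.map_projective_iff _).2 ((isProjective_iff_projective _).1 isProjective_regMod)),
    _, (isQuantaleIso_map_of_fullyFaithful e.inverse _).comp isQuantaleIso_actHom⟩

end QMod

theorem morita_iff_projective_generator (A B : Type u) [UQuantale A] [UQuantale B] :
    MoritaEquivalent A B ↔
      ∃ Q : QMod.{u, u} A, QMod.IsGenerator Q ∧ QMod.IsProjective Q ∧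
        ∃ f : B → (Q ⟶ Q), IsQuantaleIso f :=
  ⟨fun ⟨e⟩ => QMod.exists_projective_generator_of_equivalence e,
    fun ⟨Q, hgen, hproj, _, hf⟩ => QMod.moritaEquivalent_of_projective_generator Q hgen hproj hf⟩
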